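/- arXiv:quant-ph/0702250 — 4 statements merged into one kernel-verified Lean document; each statement's English description precedes it below -/
import Mathlib

section
/- Let $({\bf X}, I)$ be an $l \times (l+m)$ random Toeplitz matrix over $\mathbb{F}_2$, i.e., $X_{i,j} = Y_{i+j-1}$ where $Y_1,\ldots,Y_{l+m-1}$ are independent uniform random bits. Then for any nonzero $Z \in \mathbb{F}_2^{l+m}$, the probability that $Z$ belongs to the image of the transpose $({\bf X},I)^T$ is at most $2^{-m}$. -/
open Finset Matrix

/-!
Write `Z = (a, b)` with `b` the last `l` coordinates. Then `Z = (X, I)ᵀ v` forces `v = b`, so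
`Z` lies in the image exactly when `Xᵀ b = a`; for `b = 0` this contradicts `Z ≠ 0`. Otherwise
let `i₀` be the last index with `b i₀ ≠ 0`. The `k`-th equation of `Xᵀ b = a` contains
`Y (i₀ + k)` with coefficient `b i₀` and besides it only bits of smaller index, so a solution `Y`
is determined by its bits outside the window `i₀, …, i₀ + m - 1`: there are at most `2 ^ (l - 1)`
solutions among the `2 ^ (l + m - 1)` choices of `Y`.
-/

/-- The `l × (l+m)` Toeplitz matrix `(X, I)` over `F₂` determined by the bits
`Y₁, …, Y_{l+m-1}`: the left block has entries `X i j = Y (i+j-1)` (0-indexed: `Y (i+j)`)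
and the right block is the identity. -/
def toeplitzMat (l m : ℕ) (Y : Fin (l + m - 1) → ZMod 2) :
    Matrix (Fin l) (Fin m ⊕ Fin l) (ZMod 2) :=
  fun i j =>
    match j with
    | Sum.inl k => Y ⟨(i : ℕ) + (k : ℕ), by have := i.2; have := k.2; omega⟩
    | Sum.inr k => if i = k then 1 else 0

theorem card_filter_le_of_eqOn_compl {ι K : Type*} [Fintype ι] [DecidableEq ι] [Fintype K]
    (P : (ι → K) → Prop) [DecidablePred P] (S : Finset ι)
    (hP : ∀ Y Y', P Y → P Y' → (∀ t ∉ S, Y t = Y' t) → Y = Y') :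
    #(univ.filter P) ≤ Fintype.card K ^ (Fintype.card ι - #S) := by
  calc #(univ.filter P)
      ≤ #(univ : Finset ({t // t ∉ S} → K)) :=
        card_le_card_of_injOn (fun Y t => Y t) (fun _ _ => mem_univ _) fun Y hY Y' hY' h =>
          hP Y Y' (mem_filter.1 hY).2 (mem_filter.1 hY').2 fun t ht => congrFun h ⟨t, ht⟩
    _ = Fintype.card K ^ (Fintype.card ι - #S) := by
        rw [card_univ, Fintype.card_fun, Fintype.card_subtype_compl, Fintype.card_coe]

theorem exists_ne_zero_forall_gt_eq_zero {ι R : Type*} [Fintype ι] [LinearOrder ι] [Zero R]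
    {b : ι → R} (hb : b ≠ 0) : ∃ i₀, b i₀ ≠ 0 ∧ ∀ i, i₀ < i → b i = 0 := by
  classical
  obtain ⟨i, hi⟩ := Function.ne_iff.1 hb
  obtain ⟨i₀, hi₀, hmax⟩ :=
    (univ.filter (b · ≠ 0)).exists_max_image id ⟨i, mem_filter.2 ⟨mem_univ _, hi⟩⟩
  exact ⟨i₀, (mem_filter.1 hi₀).2, fun j hj =>
    by_contra fun h => (hmax j (mem_filter.2 ⟨mem_univ _, h⟩)).not_gt hj⟩

theorem exists_eq_transpose_fromCols_one_mulVec_iff {l m R : Type*} [Fintype l] [DecidableEq l]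
    [Semiring R] (A : Matrix l m R) (Z : m ⊕ l → R) :
    (∃ v, Z = (fromCols A 1)ᵀ *ᵥ v) ↔ Aᵀ *ᵥ (Z ∘ Sum.inr) = Z ∘ Sum.inl := by
  simp only [transpose_fromCols, fromRows_mulVec, transpose_one, one_mulVec]
  constructor
  · rintro ⟨v, rfl⟩
    rfl
  · intro h
    refine ⟨Z ∘ Sum.inr, ?_⟩
    rw [h]
    ext (k | i) <;> rfl

section Toeplitz

variable {R : Type*} {l m : ℕ}

def toeplitzBlock (l m : ℕ) (Y : Fin (l + m - 1) → R) : Matrix (Fin l) (Fin m) R :=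
  fun i k => Y ⟨i + k, by omega⟩

theorem toeplitzMat_eq_fromCols (Y : Fin (l + m - 1) → ZMod 2) :
    toeplitzMat l m Y = fromCols (toeplitzBlock l m Y) 1 := by
  ext i (k | k)
  · rfl
  · simp [toeplitzMat, one_apply]

theorem toeplitzBlock_sub [Sub R] (Y Y' : Fin (l + m - 1) → R) :
    toeplitzBlock l m (Y - Y') = toeplitzBlock l m Y - toeplitzBlock l m Y' :=
  rfl

def toeplitzWindow (i₀ : Fin l) : Finset (Fin (l + m - 1)) :=
  univ.map ⟨fun k : Fin m => ⟨i₀ + k, by omega⟩, fun k k' h => Fin.ext (by simpa using h)⟩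

theorem card_toeplitzWindow (i₀ : Fin l) : #(toeplitzWindow (m := m) i₀) = m := by
  simp [toeplitzWindow]

theorem eq_zero_of_toeplitzBlock_transpose_mulVec_eq_zero [Semiring R] [NoZeroDivisors R]
    {b : Fin l → R} {i₀ : Fin l} (hb : b i₀ ≠ 0) (hb_gt : ∀ i, i₀ < i → b i = 0)
    {Y : Fin (l + m - 1) → R} (hY : (toeplitzBlock l m Y)ᵀ *ᵥ b = 0)
    (hY_out : ∀ t ∉ toeplitzWindow i₀, Y t = 0) : Y = 0 := by
  suffices ∀ t : ℕ, ∀ ht : t < l + m - 1, Y ⟨t, ht⟩ = 0 from funext fun t => this t t.2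
  intro t
  induction t using Nat.strong_induction_on with
  | _ t ih =>
    intro ht
    by_cases hw : ⟨t, ht⟩ ∈ toeplitzWindow (m := m) i₀
    · obtain ⟨k, -, hk⟩ := mem_map.1 hw
      obtain rfl : (i₀ : ℕ) + k = t := congrArg Fin.val hk
      have hrow := congrFun hY k
      rw [mulVec, dotProduct, sum_eq_single i₀] at hrow
      · exact (mul_eq_zero.1 hrow).resolve_right hb
      · intro i _ hi
        rcases hi.lt_or_gt with hlt | hgt
        · exact mul_eq_zero_of_left (ih _ (by simpa using hlt) _) _
        · exact mul_eq_zero_of_right _ (hb_gt i hgt)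
      · exact absurd (mem_univ _)
    · exact hY_out _ hw

theorem eq_of_toeplitzBlock_transpose_mulVec_eq [Ring R] [NoZeroDivisors R]
    {b : Fin l → R} {i₀ : Fin l} (hb : b i₀ ≠ 0) (hb_gt : ∀ i, i₀ < i → b i = 0)
    {a : Fin m → R} {Y Y' : Fin (l + m - 1) → R} (hY : (toeplitzBlock l m Y)ᵀ *ᵥ b = a)
    (hY' : (toeplitzBlock l m Y')ᵀ *ᵥ b = a) (h_out : ∀ t ∉ toeplitzWindow i₀, Y t = Y' t) :
    Y = Y' := by
  refine sub_eq_zero.1 (eq_zero_of_toeplitzBlock_transpose_mulVec_eq_zero hb hb_gt ?_ ?_)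
  · rw [toeplitzBlock_sub, transpose_sub, sub_mulVec, hY, hY', sub_self]
  · exact fun t ht => sub_eq_zero.2 (h_out t ht)

end Toeplitz

open Classical in
/-- For a random Toeplitz matrix `(X, I)` (with i.i.d. uniform bits `Y`), any nonzero
`Z ∈ F₂^{l+m}` belongs to the image of the transpose `(X, I)ᵀ` with probability at
most `2^{-m}`. -/
theorem toeplitz_image_prob_le (l m : ℕ) (Z : Fin m ⊕ Fin l → ZMod 2) (hZ : Z ≠ 0) :
    ((Finset.univ.filter (fun Y : Fin (l + m - 1) → ZMod 2 =>
        ∃ v : Fin l → ZMod 2, Z = (toeplitzMat l m Y)ᵀ.mulVec v)).card : ℝ)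
      / 2 ^ (l + m - 1) ≤ ((2 : ℝ) ^ m)⁻¹ := by
  rw [filter_congr fun Y _ => by
    rw [toeplitzMat_eq_fromCols, exists_eq_transpose_fromCols_one_mulVec_iff]]
  by_cases hb : Z ∘ Sum.inr = 0
  · have ha : Z ∘ Sum.inl ≠ 0 := fun ha => hZ <| by
      ext (k | i)
      exacts [congrFun ha k, congrFun hb i]
    rw [filter_false_of_mem fun Y _ => by rw [hb, mulVec_zero]; exact Ne.symm ha]
    simp
  obtain ⟨i₀, hi₀, hb_gt⟩ := exists_ne_zero_forall_gt_eq_zero hb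
  have hcard := card_filter_le_of_eqOn_compl
    (fun Y => (toeplitzBlock l m Y)ᵀ *ᵥ (Z ∘ Sum.inr) = Z ∘ Sum.inl) (toeplitzWindow i₀)
    fun Y Y' hY hY' => eq_of_toeplitzBlock_transpose_mulVec_eq hi₀ hb_gt hY hY'
  rw [card_toeplitzWindow, ZMod.card, Fintype.card_fin] at hcard
  calc _ ≤ (2 : ℝ) ^ (l + m - 1 - m) / 2 ^ (l + m - 1) := by gcongr; exact_mod_cast hcard
    _ = ((2 : ℝ) ^ m)⁻¹ := by
      rw [pow_sub₀ _ two_ne_zero (by have := i₀.isLt; omega)]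
      field_simp
end

section
/- Let $Z=(x,y)^T \in \mathbb{F}_2^m \oplus \mathbb{F}_2^l$ with $y \neq 0$. For a random Toeplitz matrix $({\bf X},I)$ with $X_{i,j}=Y_{i+j-1}$ and $Y_1,\ldots,Y_{l+m-1}$ independent uniform bits, the probability that $(x,y)^T = ({\bf X}^T y, y)$ equals exactly $2^{-m}$. -/
open Finset Matrix

theorem AddMonoidHom.card_fiber_mul_card_of_surjective {G M : Type*} [AddGroup G] [Fintype G]
    [AddMonoid M] [Fintype M] [DecidableEq M] (f : G →+ M) (hf : Function.Surjective f) (x : M) :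
    #{g | f g = x} * Fintype.card M = Fintype.card G := by
  calc #{g | f g = x} * Fintype.card M = ∑ t, #{g | f g = t} := by
        rw [sum_congr rfl fun t _ => AddMonoidHom.card_fiber_eq_of_mem_range f (hf t) (hf x),
          sum_const, card_univ, smul_eq_mul, mul_comm]
    _ = Fintype.card G := (card_eq_sum_card_fiberwise (by simp)).symm.trans card_univ

theorem LinearMap.surjective_of_isUnit_det {R V n : Type*} [CommRing R] [AddCommGroup V]
    [Module R V] [Fintype n] [DecidableEq n] (f : V →ₗ[R] n → R) (b : n → V)
    (h : IsUnit (Matrix.of fun i j => f (b j) i).det) : Function.Surjective f := by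
  intro t
  obtain ⟨v, hv⟩ := mulVec_surjective_iff_isUnit.2 ((Matrix.isUnit_iff_isUnit_det _).2 h) t
  refine ⟨∑ j, v j • b j, ?_⟩
  rw [← hv]
  ext i
  simp [mulVec, dotProduct, mul_comm]

def toeplitzCorr {R : Type*} [CommSemiring R] {l m : ℕ} (y : Fin l → R) :
    (Fin (l + m - 1) → R) →ₗ[R] (Fin m → R) where
  toFun Y k := ∑ i, y i * Y ⟨i + k, by omega⟩
  map_add' Y Z := by ext k; simp [mul_add, sum_add_distrib]
  map_smul' c Y := by ext k; simp [mul_sum, mul_left_comm]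

@[simp]
theorem toeplitzCorr_apply {R : Type*} [CommSemiring R] {l m : ℕ} (y : Fin l → R)
    (Y : Fin (l + m - 1) → R) (k : Fin m) :
    toeplitzCorr y Y k = ∑ i, y i * Y ⟨i + k, by omega⟩ :=
  rfl

theorem exists_ne_zero_and_forall_gt_eq_zero {ι M : Type*} [LinearOrder ι] [Fintype ι] [Zero M]
    {y : ι → M} (hy : y ≠ 0) : ∃ j₀, y j₀ ≠ 0 ∧ ∀ j, j₀ < j → y j = 0 := by
  classical
  obtain ⟨j₀, hj₀, hmax⟩ := exists_max_image {j | y j ≠ 0} id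
    (by simpa [Finset.Nonempty, Function.ne_iff] using hy)
  exact ⟨j₀, (mem_filter.1 hj₀).2, fun j hj =>
    by_contra fun h => (hmax j (by simpa using h)).not_gt hj⟩

theorem toeplitzCorr_surjective {K : Type*} [Field K] {l m : ℕ} {y : Fin l → K} (hy : y ≠ 0) :
    Function.Surjective (toeplitzCorr (m := m) y) := by
  obtain ⟨j₀, hj₀, hmax⟩ := exists_ne_zero_and_forall_gt_eq_zero hy
  let b : Fin m → Fin (l + m - 1) → K := fun k => Pi.single ⟨j₀ + k, by omega⟩ 1
  have hlower : ∀ k' k : Fin m, k' < k → toeplitzCorr y (b k) k' = 0 := by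
    intro k' k hk
    rw [toeplitzCorr_apply]
    refine sum_eq_zero fun i _ => ?_
    by_cases hi : (i : ℕ) + k' = j₀ + k
    · rw [hmax i (by rw [Fin.lt_def]; omega), zero_mul]
    · simp [b, Fin.ext_iff, hi]
  have hdiag : ∀ k : Fin m, toeplitzCorr y (b k) k = y j₀ := by
    intro k
    rw [toeplitzCorr_apply, sum_eq_single j₀ (fun i _ hi => ?_) (by simp)]
    · simp [b]
    · simp [b, Fin.ext_iff, Fin.val_ne_iff.2 hi]
  refine (toeplitzCorr y).surjective_of_isUnit_det b ?_
  have hM : (of fun k' k => toeplitzCorr y (b k) k').IsLowerTriangular :=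
    fun k' k hk => hlower k' k hk
  rw [det_of_isLowerTriangular _ hM]
  simp only [of_apply, hdiag, prod_const]
  exact hj₀.isUnit.pow _

theorem transpose_toeplitzMat_mulVec {l m : ℕ} (Y : Fin (l + m - 1) → ZMod 2) (y : Fin l → ZMod 2) :
    (toeplitzMat l m Y)ᵀ *ᵥ y = Sum.elim (toeplitzCorr y Y) y := by
  ext (k | k) <;> simp [mulVec, dotProduct, toeplitzMat, mul_comm]

open Classical in
/-- If `Z = (x, y)ᵀ` with `y ≠ 0`, then for a random Toeplitz matrix `(X, I)` with
i.i.d. uniform bits `Y`, the probability that `(x, y)ᵀ = (Xᵀ y, y)`, i.e. that `Z` lies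
in the image of `(X, I)ᵀ` applied to `y`, equals exactly `2^{-m}`. -/
theorem toeplitz_image_prob_eq (l m : ℕ) (x : Fin m → ZMod 2) (y : Fin l → ZMod 2)
    (hy : y ≠ 0) :
    ((Finset.univ.filter (fun Y : Fin (l + m - 1) → ZMod 2 =>
        Sum.elim x y = (toeplitzMat l m Y)ᵀ.mulVec y)).card : ℝ)
      / 2 ^ (l + m - 1) = ((2 : ℝ) ^ m)⁻¹ := by
  have hcount := (toeplitzCorr y).toAddMonoidHom.card_fiber_mul_card_of_surjective
    (toeplitzCorr_surjective hy) x
  simp only [LinearMap.toAddMonoidHom_coe, Fintype.card_fun, ZMod.card, Fintype.card_fin] at hcount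
  simp only [transpose_toeplitzMat_mulVec, Sum.elim_eq_iff, and_true, eq_comm (a := x)]
  have hR : (#{Y | toeplitzCorr y Y = x} : ℝ) * 2 ^ m = 2 ^ (l + m - 1) := by
    exact_mod_cast hcount
  rw [div_eq_iff (by positivity), ← hR, mul_comm, mul_inv_cancel_right₀ (by positivity)]
end

section
/- For any two density operators $\rho, \rho'$ on a finite-dimensional Hilbert space, the trace distance satisfies $\|\rho - \rho'\|_1 \geq 2(1 - F(\rho,\rho'))$, where $F(\rho,\rho') = \mathrm{Tr}\sqrt{\sqrt{\rho'}\rho\sqrt{\rho'}}$ is the fidelity. -/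
open Matrix
open scoped ComplexOrder

open Classical in
/-- The positive-semidefinite square root of a matrix (junk value `0` off the PSD cone). -/
noncomputable def msqrt {ι : Type*} [Fintype ι] [DecidableEq ι]
    (A : Matrix ι ι ℂ) : Matrix ι ι ℂ :=
  if h : A.PosSemidef then
    (h.1.eigenvectorUnitary : Matrix ι ι ℂ) * diagonal ((↑) ∘ Real.sqrt ∘ h.1.eigenvalues) *
      (star h.1.eigenvectorUnitary : Matrix ι ι ℂ) else 0

/-- The trace norm `‖A‖₁ = Tr √(Aᴴ A)`. -/
noncomputable def traceNorm {ι : Type*} [Fintype ι] [DecidableEq ι]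
    (A : Matrix ι ι ℂ) : ℝ :=
  ((msqrt (Aᴴ * A)).trace).re

/-- The Uhlmann fidelity `F(ρ, ρ') = Tr √(√ρ' ρ √ρ')`. -/
noncomputable def fidelity {ι : Type*} [Fintype ι] [DecidableEq ι]
    (ρ ρ' : Matrix ι ι ℂ) : ℝ :=
  ((msqrt (msqrt ρ' * ρ * msqrt ρ')).trace).re

/-! With `A = √ρ`, `B = √ρ'` and `C = A - B`, the Powers–Størmer argument bounds
`‖A² - B²‖₁ ≥ Tr C²`: if `S` is the unitary sign of `C`, then `Tr S (A² - B²) = Tr |C| (A + B)`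
because `A² - B² = (C (A + B) + (A + B) C) / 2`, and `|C| ∓ C ≥ 0` bounds this below by `Tr C²`.
Since `Tr ρ = Tr ρ' = 1`, `Tr C² = 2 - 2 Re Tr AB`, and `Re Tr AB ≤ ‖AB‖₁ = F(ρ, ρ')`. -/

section
variable {ι 𝕜 : Type*} [Fintype ι] [DecidableEq ι] [RCLike 𝕜]
open scoped MatrixOrder InnerProductSpace

lemma Matrix.trace_eq_sum_inner (X : Matrix ι ι 𝕜)
    (b : OrthonormalBasis ι 𝕜 (EuclideanSpace 𝕜 ι)) :
    X.trace = ∑ j, ⟪b j, toEuclideanLin X (b j)⟫_𝕜 := by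
  rw [← LinearMap.trace_eq_sum_inner, toEuclideanLin_eq_toLin_orthonormal, trace_toLin_eq]

lemma Matrix.IsHermitian.toEuclideanLin_eigenvectorBasis {A : Matrix ι ι 𝕜} (hA : A.IsHermitian)
    (j : ι) :
    toEuclideanLin A (hA.eigenvectorBasis j) = (hA.eigenvalues j : 𝕜) • hA.eigenvectorBasis j := by
  ext i
  simpa [toLpLin_apply] using congrFun (hA.mulVec_eigenvectorBasis j) i

lemma Matrix.inner_toEuclideanLin_conjTranspose_mul (T : Matrix ι ι 𝕜)
    (x y : EuclideanSpace 𝕜 ι) :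
    ⟪x, toEuclideanLin (Tᴴ * T) y⟫_𝕜 = ⟪toEuclideanLin T x, toEuclideanLin T y⟫_𝕜 := by
  rw [toLpLin_mul_same, LinearMap.comp_apply, toEuclideanLin_conjTranspose_eq_adjoint,
    LinearMap.adjoint_inner_right]

lemma Matrix.PosSemidef.trace_mul_nonneg {P Q : Matrix ι ι 𝕜} (hP : P.PosSemidef)
    (hQ : Q.PosSemidef) : 0 ≤ (P * Q).trace := by
  rw [← CFC.sqrt_mul_sqrt_self P hP.nonneg, mul_assoc, trace_mul_comm]
  nth_rewrite 1 [← (CFC.sqrt_nonneg P).posSemidef.1.eq]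
  exact (hQ.conjTranspose_mul_mul_same _).trace_nonneg

lemma Matrix.IsHermitian.exists_unitary_mul_eq_abs {C : Matrix ι ι 𝕜} (hC : C.IsHermitian) :
    ∃ S ∈ unitaryGroup ι 𝕜, S * C = CFC.abs C ∧ C * S = CFC.abs C := by
  -- the sign function, with value `1` at `0` so that `S * S = 1`
  let σ : ℝ → ℝ := fun x => if 0 ≤ x then 1 else -1
  have hσ : ContinuousOn σ (spectrum ℝ C) := (spectrum ℝ C).toFinite.continuousOn _
  have hσσ (x : ℝ) : σ x * σ x = 1 := by by_cases hx : 0 ≤ x <;> simp [σ, hx]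
  have hσx (x : ℝ) : σ x * x = |x| := by
    by_cases hx : 0 ≤ x
    · simp [σ, hx, abs_of_nonneg hx]
    · simp [σ, hx, abs_of_neg (not_le.1 hx)]
  have hSS : cfc σ C * cfc σ C = 1 := by
    rw [← cfc_mul σ σ C hσ hσ, funext hσσ, cfc_const_one ℝ C]
  have hcomm : Commute (cfc σ C) C := by simpa only [cfc_id ℝ C] using cfc_commute_cfc σ id C
  have hSC : cfc σ C * C = CFC.abs C :=
    calc cfc σ C * C = cfc σ C * cfc id C := by rw [cfc_id ℝ C]
      _ = cfc (fun x => σ x * id x) C := (cfc_mul σ id C hσ).symm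
      _ = CFC.abs C := by
        rw [CFC.abs_eq_cfc_norm C hC.isSelfAdjoint]
        exact cfc_congr fun x _ => by simp [hσx]
  refine ⟨cfc σ C, ?_, hSC, hcomm.eq ▸ hSC⟩
  rw [mem_unitaryGroup_iff, (cfc_predicate σ C : IsSelfAdjoint _).star_eq, hSS]

lemma msqrt_eq_sqrt {A : Matrix ι ι ℂ} (hA : A.PosSemidef) : msqrt A = CFC.sqrt A := by
  rw [CFC.sqrt_eq_real_sqrt A hA.nonneg, cfcₙ_eq_cfc (hf0 := Real.sqrt_zero), hA.1.cfc_eq,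
    msqrt, dif_pos hA]
  rfl

lemma posSemidef_msqrt {A : Matrix ι ι ℂ} (hA : A.PosSemidef) : (msqrt A).PosSemidef := by
  rw [msqrt_eq_sqrt hA]
  exact (CFC.sqrt_nonneg A).posSemidef

lemma msqrt_mul_self {A : Matrix ι ι ℂ} (hA : A.PosSemidef) : msqrt A * msqrt A = A := by
  rw [msqrt_eq_sqrt hA]
  exact CFC.sqrt_mul_sqrt_self A hA.nonneg

lemma traceNorm_eq_re_trace_abs (T : Matrix ι ι ℂ) : traceNorm T = (CFC.abs T).trace.re := by
  rw [traceNorm, msqrt_eq_sqrt (posSemidef_conjTranspose_mul_self T)]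
  rfl

lemma traceNorm_unitary_mul {U : Matrix ι ι ℂ} (hU : U ∈ unitaryGroup ι ℂ) (T : Matrix ι ι ℂ) :
    traceNorm (U * T) = traceNorm T := by
  have hUU : Uᴴ * U = 1 := mem_unitaryGroup_iff'.1 hU
  rw [traceNorm, traceNorm, conjTranspose_mul, mul_assoc, ← mul_assoc Uᴴ, hUU, one_mul]

lemma fidelity_eq_traceNorm {ρ σ : Matrix ι ι ℂ} (hρ : ρ.PosSemidef) (hσ : σ.PosSemidef) :
    fidelity ρ σ = traceNorm (msqrt ρ * msqrt σ) := by
  have h : (msqrt ρ * msqrt σ)ᴴ * (msqrt ρ * msqrt σ) = msqrt σ * ρ * msqrt σ := by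
    rw [conjTranspose_mul, (posSemidef_msqrt hρ).1.eq, (posSemidef_msqrt hσ).1.eq, mul_assoc,
      ← mul_assoc (msqrt ρ), msqrt_mul_self hρ, ← mul_assoc]
  rw [fidelity, traceNorm, h]

lemma re_trace_le_traceNorm (T : Matrix ι ι ℂ) : T.trace.re ≤ traceNorm T := by
  have hP : (CFC.abs T).PosSemidef := (CFC.abs_nonneg T).posSemidef
  set b := hP.1.eigenvectorBasis
  -- `‖T b‖² = ⟪b, |T|² b⟫` for each eigenvector `b` of `|T|`
  have hnorm (j : ι) : ‖toEuclideanLin T (b j)‖ = hP.1.eigenvalues j := by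
    have hsq : ‖toEuclideanLin T (b j)‖ ^ 2 = hP.1.eigenvalues j ^ 2 := by
      rw [← inner_self_eq_norm_sq (𝕜 := ℂ), ← inner_toEuclideanLin_conjTranspose_mul,
        ← star_eq_conjTranspose, ← CFC.abs_mul_abs, toLpLin_mul_same, LinearMap.comp_apply,
        hP.1.toEuclideanLin_eigenvectorBasis, map_smul, hP.1.toEuclideanLin_eigenvectorBasis,
        inner_smul_right, inner_smul_right, inner_self_eq_norm_sq_to_K, b.orthonormal.1 j]
      simp [sq]
    exact (pow_left_inj₀ (norm_nonneg _) (hP.eigenvalues_nonneg j) two_ne_zero).1 hsq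
  rw [traceNorm_eq_re_trace_abs, trace_eq_sum_inner T b, trace_eq_sum_inner _ b, Complex.re_sum,
    Complex.re_sum]
  refine Finset.sum_le_sum fun j _ => ?_
  calc (⟪b j, toEuclideanLin T (b j)⟫_ℂ).re ≤ ‖⟪b j, toEuclideanLin T (b j)⟫_ℂ‖ :=
        Complex.re_le_norm _
    _ ≤ ‖b j‖ * ‖toEuclideanLin T (b j)‖ := norm_inner_le_norm _ _
    _ = (⟪b j, toEuclideanLin (CFC.abs T) (b j)⟫_ℂ).re := by
        rw [hnorm, hP.1.toEuclideanLin_eigenvectorBasis, inner_smul_right,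
          inner_self_eq_norm_sq_to_K, b.orthonormal.1 j]
        simp

lemma re_trace_mul_self_sub_le_traceNorm_mul_self_sub_mul_self {A B : Matrix ι ι ℂ}
    (hA : A.PosSemidef) (hB : B.PosSemidef) :
    ((A - B) * (A - B)).trace.re ≤ traceNorm (A * A - B * B) := by
  set C := A - B
  have hC : C.IsHermitian := hA.1.sub hB.1
  obtain ⟨S, hS, hSC, hCS⟩ := hC.exists_unitary_mul_eq_abs
  have hsign : (S * (A * A - B * B)).trace = (CFC.abs C * (A + B)).trace := by
    have hsplit : (A * A - B * B) + (A * A - B * B) = C * (A + B) + (A + B) * C := by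
      simp only [C]; noncomm_ring
    have h2 : (S * (A * A - B * B)).trace + (S * (A * A - B * B)).trace
        = (CFC.abs C * (A + B)).trace + (CFC.abs C * (A + B)).trace := by
      rw [← trace_add, ← mul_add, hsplit, mul_add, trace_add, ← mul_assoc, ← mul_assoc,
        trace_mul_cycle S (A + B) C, hSC, hCS]
    linear_combination h2 / 2
  have habs_sub : 0 ≤ CFC.abs C - C := by
    rw [CFC.abs_sub_self C hC.isSelfAdjoint]
    exact nsmul_nonneg (CFC.negPart_nonneg C) 2
  have habs_add : 0 ≤ CFC.abs C + C := by
    rw [CFC.abs_add_self C hC.isSelfAdjoint]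
    exact nsmul_nonneg (CFC.posPart_nonneg C) 2
  have hsq_le : (C * C).trace ≤ (CFC.abs C * (A + B)).trace := by
    have hgap : (CFC.abs C * (A + B)).trace - (C * C).trace
        = ((CFC.abs C - C) * A).trace + ((CFC.abs C + C) * B).trace := by
      rw [← trace_sub, ← trace_add]
      simp only [C]
      noncomm_ring
    rw [← sub_nonneg, hgap]
    exact add_nonneg (habs_sub.posSemidef.trace_mul_nonneg hA)
      (habs_add.posSemidef.trace_mul_nonneg hB)
  calc (C * C).trace.re ≤ (CFC.abs C * (A + B)).trace.re := Complex.re_le_re hsq_le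
    _ = (S * (A * A - B * B)).trace.re := by rw [hsign]
    _ ≤ traceNorm (S * (A * A - B * B)) := re_trace_le_traceNorm _
    _ = traceNorm (A * A - B * B) := traceNorm_unitary_mul hS _

end

/-- For density operators `ρ, ρ'` on a finite-dimensional Hilbert space,
`‖ρ - ρ'‖₁ ≥ 2 (1 - F(ρ, ρ'))`. -/
theorem traceNorm_ge_two_mul_one_sub_fidelity {n : ℕ}
    (ρ ρ' : Matrix (Fin n) (Fin n) ℂ)
    (hρ : ρ.PosSemidef) (hρtr : ρ.trace = 1)
    (hρ' : ρ'.PosSemidef) (hρ'tr : ρ'.trace = 1) :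
    traceNorm (ρ - ρ') ≥ 2 * (1 - fidelity ρ ρ') := by
  set A := msqrt ρ
  set B := msqrt ρ'
  have hA : A.PosSemidef := posSemidef_msqrt hρ
  have hB : B.PosSemidef := posSemidef_msqrt hρ'
  have hsq : ((A - B) * (A - B)).trace.re = 2 - 2 * (A * B).trace.re := by
    have h : (A - B) * (A - B) = A * A - A * B - B * A + B * B := by noncomm_ring
    rw [h, trace_add, trace_sub, trace_sub, trace_mul_comm B A, msqrt_mul_self hρ,
      msqrt_mul_self hρ', hρtr, hρ'tr]
    simp only [Complex.add_re, Complex.sub_re, Complex.one_re]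
    ring
  calc traceNorm (ρ - ρ') = traceNorm (A * A - B * B) := by
        rw [msqrt_mul_self hρ, msqrt_mul_self hρ']
    _ ≥ ((A - B) * (A - B)).trace.re :=
        re_trace_mul_self_sub_le_traceNorm_mul_self_sub_mul_self hA hB
    _ = 2 - 2 * (A * B).trace.re := hsq
    _ ≥ 2 * (1 - fidelity ρ ρ') := by
        rw [fidelity_eq_traceNorm hρ hρ']
        linarith [re_trace_le_traceNorm (A * B)]
end

section
/- Let $C_1 \subset \mathbb{F}_2^N$ be an $(l+m)$-dimensional linear code and let $C_2(X) \subset C_1$ be a random $m$-dimensional subcode such that $\mathrm{P}_X\{x \in C_2(X)^\perp\} \leq 2^{-m}$ for every $x \in \mathbb{F}_2^N \setminus C_1^\perp$. Partition the $N$ coordinates into a noiseless part of size $n_0$, a part of size $n_1$ where at most $t \le n_1/2$ errors occur, and a part of size $n_2$ with arbitrary errors. If Alice sends a uniformly random representative of a coset $[x] \in C_2(X)^\perp/C_1^\perp$ and Bob decodes the received word $y$ to the element of $C_2(X)^\perp$ agreeing with $y$ on the noiseless part and minimizing the Hamming weight of the difference on the $n_1$-part, then the expected (over $X$) decoding error probability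 is at most $2^{n_1 \bar{h}(t/n_1) + n_2 - m}$. -/
open Matrix

/-- Vectors over `F₂` whose `N = n₀ + n₁ + n₂` coordinates are partitioned into three
parts of sizes `n₀`, `n₁`, `n₂`. -/
abbrev BitVec3 (n0 n1 n2 : ℕ) := (Fin n0 ⊕ Fin n1 ⊕ Fin n2) → ZMod 2

/-- The dual code `C^⊥ = {z | z ⋅ c = 0 for all c ∈ C}`. -/
def dualCode {ι : Type*} [Fintype ι] (C : Submodule (ZMod 2) (ι → ZMod 2)) :
    Submodule (ZMod 2) (ι → ZMod 2) where
  carrier := {z | ∀ c ∈ C, z ⬝ᵥ c = 0}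
  add_mem' := by
    intro a b ha hb c hc
    simp [add_dotProduct, ha c hc, hb c hc]
  zero_mem' := by
    intro c hc
    simp
  smul_mem' := by
    intro r a ha c hc
    simp [smul_dotProduct, ha c hc]

/-- The binary entropy function, extended by `1` above `1/2`. -/
noncomputable def hbar (x : ℝ) : ℝ :=
  if x ≤ 1 / 2 then -x * Real.logb 2 x - (1 - x) * Real.logb 2 (1 - x) else 1

/-! If Bob decodes `y = x + c + e` wrongly, the shift `v = Γ y - (x + c)` lies in
`C₂(X)^⊥ \ C₁^⊥`, vanishes on the noiseless part and, because `x + c` competes with `Γ y` in the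
minimisation, is within Hamming distance `t` of `e` on the `n₁`-part. For fixed `e` there are at
most `2^{n₁ h̄(t/n₁)} 2^{n₂}` such candidates, and each lies in `C₂(X)^⊥ \ C₁^⊥` with probability
at most `2^{-m}`; a union bound over the candidates, averaged over `c` and `e`, gives the claim. -/

open Finset

theorem pow_mul_one_sub_pow_le_of_le {p : ℝ} (hp0 : 0 ≤ p) (hp : p ≤ 1 / 2) {j t n : ℕ}
    (hjt : j ≤ t) (htn : t ≤ n) :
    p ^ t * (1 - p) ^ (n - t) ≤ p ^ j * (1 - p) ^ (n - j) := by
  have hsplit_t : p ^ t = p ^ j * p ^ (t - j) := by rw [← pow_add, Nat.add_sub_cancel' hjt]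
  have hsplit_n : (1 - p) ^ (n - j) = (1 - p) ^ (t - j) * (1 - p) ^ (n - t) := by
    rw [← pow_add]; congr 1; omega
  have h1p : 0 ≤ 1 - p := by linarith
  rw [hsplit_t, hsplit_n, mul_assoc]
  gcongr
  linarith

theorem sum_range_choose_mul_pow_le_one {p : ℝ} (hp0 : 0 ≤ p) (hp : p ≤ 1 / 2) {t n : ℕ}
    (htn : t ≤ n) :
    (∑ j ∈ range (t + 1), (n.choose j : ℝ)) * (p ^ t * (1 - p) ^ (n - t)) ≤ 1 :=
  calc (∑ j ∈ range (t + 1), (n.choose j : ℝ)) * (p ^ t * (1 - p) ^ (n - t))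
      ≤ ∑ j ∈ range (t + 1), p ^ j * (1 - p) ^ (n - j) * n.choose j := by
        rw [sum_mul]
        refine sum_le_sum fun j hj => ?_
        rw [mul_comm]
        exact mul_le_mul_of_nonneg_right
          (pow_mul_one_sub_pow_le_of_le hp0 hp (Nat.lt_succ_iff.mp (mem_range.mp hj)) htn)
          (Nat.cast_nonneg _)
    _ ≤ ∑ j ∈ range (n + 1), p ^ j * (1 - p) ^ (n - j) * n.choose j := by
        refine sum_le_sum_of_subset_of_nonneg (range_subset_range.mpr (by omega)) ?_
        intro j _ _
        have : 0 ≤ 1 - p := by linarith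
        positivity
    _ = 1 := by rw [← add_pow, add_sub_cancel, one_pow]

theorem natCast_div_le_one_half_iff {t n : ℕ} (hn : 0 < n) :
    (t : ℝ) / n ≤ 1 / 2 ↔ 2 * t ≤ n := by
  rw [div_le_div_iff₀ (by exact_mod_cast hn) two_pos]
  norm_cast
  omega

theorem two_rpow_mul_hbar_div_eq {t n : ℕ} (ht : 0 < t) (htn : 2 * t ≤ n) :
    (2 : ℝ) ^ ((n : ℝ) * hbar (t / n)) =
      (((t : ℝ) / n) ^ t * (1 - (t : ℝ) / n) ^ (n - t))⁻¹ := by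
  set p : ℝ := t / n
  have hn : (0 : ℝ) < n := by exact_mod_cast (show 0 < n by omega)
  have hp0 : 0 < p := by positivity
  have hp : p ≤ 1 / 2 := (natCast_div_le_one_half_iff (by omega)).mpr htn
  have h1p : 0 < 1 - p := by linarith
  have hnp : (n : ℝ) * p = t := mul_div_cancel₀ _ hn.ne'
  have hexp : (n : ℝ) * hbar p =
      Real.logb 2 p * -(t : ℝ) + Real.logb 2 (1 - p) * -((n - t : ℕ) : ℝ) := by
    rw [hbar, if_pos hp, Nat.cast_sub (by omega)]
    linear_combination (Real.logb 2 (1 - p) - Real.logb 2 p) * hnp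
  rw [hexp, Real.rpow_add two_pos, Real.rpow_mul zero_le_two, Real.rpow_mul zero_le_two,
    Real.rpow_logb two_pos (by norm_num) hp0, Real.rpow_logb two_pos (by norm_num) h1p,
    Real.rpow_neg hp0.le, Real.rpow_neg h1p.le, Real.rpow_natCast, Real.rpow_natCast, mul_inv]

theorem sum_range_choose_le_two_rpow_mul_hbar {t n : ℕ} (ht : 0 < t) (htn : 2 * t ≤ n) :
    ∑ j ∈ range (t + 1), (n.choose j : ℝ) ≤ 2 ^ ((n : ℝ) * hbar (t / n)) := by
  have hn : (0 : ℝ) < n := by exact_mod_cast (show 0 < n by omega)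
  have hp : (t : ℝ) / n ≤ 1 / 2 := (natCast_div_le_one_half_iff (by omega)).mpr htn
  have hp1 : 0 < 1 - (t : ℝ) / n := by linarith
  rw [two_rpow_mul_hbar_div_eq ht htn, ← one_div, le_div_iff₀ (by positivity)]
  exact sum_range_choose_mul_pow_le_one (by positivity) hp (by omega)

theorem card_filter_card_le_eq_sum_range_choose (ι : Type*) [Fintype ι] (t : ℕ) :
    #{s : Finset ι | #s ≤ t} = ∑ j ∈ range (t + 1), (Fintype.card ι).choose j := by
  classical
  have hunion : ({s : Finset ι | #s ≤ t} : Finset _) =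
      (range (t + 1)).biUnion fun j => powersetCard j univ := by
    ext s
    simp
  rw [hunion, card_biUnion]
  · simp [card_powersetCard]
  · intro i _ j _ hij
    simp only [disjoint_left, mem_powersetCard_univ]
    rintro s rfl hj
    exact hij hj

theorem card_filter_card_le_le_two_rpow (ι : Type*) [Fintype ι] (t : ℕ) :
    (#{s : Finset ι | #s ≤ t} : ℝ) ≤
      2 ^ ((Fintype.card ι : ℝ) * hbar (t / Fintype.card ι)) := by
  set n := Fintype.card ι
  rcases Nat.eq_zero_or_pos t with rfl | ht
  · have hempty : ({s : Finset ι | #s ≤ 0} : Finset _) = {∅} := by ext s; simp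
    simp [hempty, hbar]
  by_cases htn : 2 * t ≤ n
  · rw [card_filter_card_le_eq_sum_range_choose, Nat.cast_sum]
    exact sum_range_choose_le_two_rpow_mul_hbar ht htn
  · have hexp : (n : ℝ) * hbar (t / n) = n := by
      rcases Nat.eq_zero_or_pos n with hn | hn
      · simp [hn]
      rw [hbar, if_neg ((natCast_div_le_one_half_iff hn).not.mpr htn), mul_one]
    rw [hexp, Real.rpow_natCast]
    exact_mod_cast (card_filter_le _ _).trans_eq (by simp [n])

theorem card_hammingNorm_le_le_card_filter_card_le (ι : Type*) [Fintype ι] [DecidableEq ι] (t : ℕ) :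
    #{w : ι → ZMod 2 | hammingNorm w ≤ t} ≤ #{s : Finset ι | #s ≤ t} := by
  refine card_le_card_of_injOn (fun w => ({i | w i ≠ 0} : Finset ι)) (fun w hw => ?_)
    fun w _ w' _ h => funext fun i => ?_
  · simpa [hammingNorm] using hw
  · have hiff : w i ≠ 0 ↔ w' i ≠ 0 := by simpa using Finset.ext_iff.mp h i
    -- an element of `ZMod 2` is determined by whether it vanishes
    revert hiff
    generalize w i = a, w' i = b
    decide +revert

theorem card_hammingNorm_le_le_two_rpow (ι : Type*) [Fintype ι] [DecidableEq ι] (t : ℕ) :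
    (#{w : ι → ZMod 2 | hammingNorm w ≤ t} : ℝ) ≤
      2 ^ ((Fintype.card ι : ℝ) * hbar (t / Fintype.card ι)) :=
  (Nat.cast_le.mpr (card_hammingNorm_le_le_card_filter_card_le ι t)).trans
    (card_filter_card_le_le_two_rpow ι t)

theorem dualCode_anti {ι : Type*} [Fintype ι] {C C' : Submodule (ZMod 2) (ι → ZMod 2)}
    (h : C ≤ C') : dualCode C' ≤ dualCode C :=
  fun _ hz c hc => hz c (h hc)

theorem inv_natCard_mul_finsum_mem_le {α : Type*} {s : Set α} (hs : s.Finite) (hne : s.Nonempty)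
    {f : α → ℝ} {B : ℝ} (h : ∀ c ∈ s, f c ≤ B) : (Nat.card s : ℝ)⁻¹ * ∑ᶠ c ∈ s, f c ≤ B := by
  have hcard : Nat.card s = #hs.toFinset := by
    rw [Nat.card_coe_set_eq, Set.ncard_eq_toFinset_card s hs]
  have hpos : (0 : ℝ) < #hs.toFinset := by exact_mod_cast (hs.toFinset_nonempty.mpr hne).card_pos
  rw [finsum_mem_eq_finite_toFinset_sum _ hs, hcard, inv_mul_le_iff₀ hpos, ← nsmul_eq_mul]
  exact sum_le_card_nsmul _ _ _ fun c hc => h c (hs.mem_toFinset.mp hc)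

theorem sum_mul_card_filter_le {Ω α : Type*} [Fintype Ω] (μ : Ω → ℝ) (S : Ω → α → Prop)
    [∀ ω, DecidablePred (S ω)] (V : Finset α) {p : ℝ} (h : ∀ v ∈ V, ∑ ω with S ω v, μ ω ≤ p) :
    ∑ ω, μ ω * #{v ∈ V | S ω v} ≤ #V * p :=
  calc ∑ ω, μ ω * #{v ∈ V | S ω v} = ∑ v ∈ V, ∑ ω with S ω v, μ ω := by
        simp_rw [card_filter, Nat.cast_sum, mul_sum, sum_filter]
        rw [sum_comm]
        simp
    _ ≤ #V * p := by
        rw [← nsmul_eq_mul]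
        exact sum_le_card_nsmul _ _ _ h

namespace BitVec3

variable {n0 n1 n2 : ℕ}

def proj₀ : BitVec3 n0 n1 n2 →ₗ[ZMod 2] Fin n0 → ZMod 2 :=
  LinearMap.funLeft (ZMod 2) (ZMod 2) Sum.inl

def proj₁ : BitVec3 n0 n1 n2 →ₗ[ZMod 2] Fin n1 → ZMod 2 :=
  LinearMap.funLeft (ZMod 2) (ZMod 2) (Sum.inr ∘ Sum.inl)

def proj₂ : BitVec3 n0 n1 n2 →ₗ[ZMod 2] Fin n2 → ZMod 2 :=
  LinearMap.funLeft (ZMod 2) (ZMod 2) (Sum.inr ∘ Sum.inr)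

theorem ext_proj {v w : BitVec3 n0 n1 n2} (h₀ : proj₀ v = proj₀ w) (h₁ : proj₁ v = proj₁ w)
    (h₂ : proj₂ v = proj₂ w) : v = w := by
  funext i
  rcases i with i | i | i
  exacts [congrFun h₀ i, congrFun h₁ i, congrFun h₂ i]

def IsAdmissibleError (t : ℕ) (e : BitVec3 n0 n1 n2) : Prop :=
  proj₀ e = 0 ∧ hammingNorm (proj₁ e) ≤ t

/-- The shifts `v` for which `x + v` explains the received word `x + e` as well as the channel
allows; a decoding error from `x` can only land on one of them. -/
def confusable (t : ℕ) (e : BitVec3 n0 n1 n2) : Finset (BitVec3 n0 n1 n2) :=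
  {v | proj₀ v = 0 ∧ hammingNorm (proj₁ (e - v)) ≤ t}

theorem card_confusable_le (t : ℕ) (e : BitVec3 n0 n1 n2) :
    #(confusable t e) ≤ #{w : Fin n1 → ZMod 2 | hammingNorm w ≤ t} * 2 ^ n2 := by
  let ball : Finset (Fin n1 → ZMod 2) := {w | hammingNorm w ≤ t}
  have hmaps : Set.MapsTo (fun v => (proj₁ (e - v), proj₂ v)) (confusable t e)
      (ball ×ˢ (univ : Finset (Fin n2 → ZMod 2)) : Finset _) := fun v hv => by
    simp only [confusable, mem_coe, mem_filter, mem_univ, true_and] at hv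
    simpa [ball] using hv.2
  have hinj : Set.InjOn (fun v => (proj₁ (e - v), proj₂ v)) (confusable t e) :=
    fun v hv w hw h => by
      simp only [confusable, mem_coe, mem_filter, mem_univ, true_and] at hv hw
      simp only [Prod.mk.injEq, map_sub, sub_right_inj] at h
      exact ext_proj (hv.1.trans hw.1.symm) h.1 h.2
  calc #(confusable t e) ≤ #(ball ×ˢ (univ : Finset (Fin n2 → ZMod 2))) :=
        card_le_card_of_injOn _ hmaps hinj
    _ = _ := by simp [ball]

theorem card_confusable_le_two_rpow (t : ℕ) (e : BitVec3 n0 n1 n2) :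
    (#(confusable t e) : ℝ) ≤ 2 ^ ((n1 : ℝ) * hbar (t / n1)) * 2 ^ n2 := by
  have hball := card_hammingNorm_le_le_two_rpow (Fin n1) t
  rw [Fintype.card_fin] at hball
  calc (#(confusable t e) : ℝ) ≤ #{w : Fin n1 → ZMod 2 | hammingNorm w ≤ t} * 2 ^ n2 := by
        exact_mod_cast card_confusable_le t e
    _ ≤ _ := by gcongr

structure IsMinWeightDecoder (D : Submodule (ZMod 2) (BitVec3 n0 n1 n2))
    (dec : BitVec3 n0 n1 n2 → BitVec3 n0 n1 n2) : Prop where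
  mem : ∀ y, dec y ∈ D
  proj₀_eq : ∀ y, proj₀ (dec y) = proj₀ y
  hammingNorm_le : ∀ y, ∀ z ∈ D, proj₀ z = proj₀ y →
    hammingNorm (proj₁ (y - dec y)) ≤ hammingNorm (proj₁ (y - z))

namespace IsMinWeightDecoder

variable {D : Submodule (ZMod 2) (BitVec3 n0 n1 n2)} {dec : BitVec3 n0 n1 n2 → BitVec3 n0 n1 n2}

theorem sub_mem_confusable (hdec : IsMinWeightDecoder D dec) {x e : BitVec3 n0 n1 n2} {t : ℕ}
    (hx : x ∈ D) (he : IsAdmissibleError t e) : dec (x + e) - x ∈ confusable t e := by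
  have hproj₀ : proj₀ (x + e) = proj₀ x := by rw [map_add, he.1, add_zero]
  simp only [confusable, mem_filter, mem_univ, true_and]
  refine ⟨by rw [map_sub, hdec.proj₀_eq, hproj₀, sub_self], ?_⟩
  calc hammingNorm (proj₁ (e - (dec (x + e) - x)))
      = hammingNorm (proj₁ (x + e - dec (x + e))) := by congr 2; abel
    _ ≤ hammingNorm (proj₁ (x + e - x)) := hdec.hammingNorm_le _ x hx hproj₀.symm
    _ ≤ t := by rw [add_sub_cancel_left]; exact he.2

open Classical in
theorem indicator_error_le_card (hdec : IsMinWeightDecoder D dec)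
    {E : Submodule (ZMod 2) (BitVec3 n0 n1 n2)} (hED : E ≤ D) {x c e : BitVec3 n0 n1 n2} {t : ℕ}
    (hx : x ∈ D) (hc : c ∈ E) (he : IsAdmissibleError t e) :
    (if dec (x + c + e) - x ∈ E then 0 else 1 : ℝ) ≤ #{v ∈ confusable t e | v ∈ D ∧ v ∉ E} := by
  split_ifs with herr
  · positivity
  have hv : dec (x + c + e) - (x + c) ∈ {v ∈ confusable t e | v ∈ D ∧ v ∉ E} := by
    refine mem_filter.mpr ⟨hdec.sub_mem_confusable (add_mem hx (hED hc)) he, ?_, fun hE => ?_⟩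
    · exact sub_mem (hdec.mem _) (add_mem hx (hED hc))
    · exact herr (by simpa [sub_add_eq_sub_sub] using add_mem hE hc)
  exact_mod_cast card_pos.mpr ⟨_, hv⟩

open Classical in
theorem average_error_le (hdec : IsMinWeightDecoder D dec)
    {E : Submodule (ZMod 2) (BitVec3 n0 n1 n2)} (hED : E ≤ D) {x : BitVec3 n0 n1 n2} {t : ℕ}
    (hx : x ∈ D) {q : BitVec3 n0 n1 n2 → ℝ} (hq0 : ∀ e, 0 ≤ q e)
    (hq : ∀ e, q e ≠ 0 → IsAdmissibleError t e) :
    (Nat.card E : ℝ)⁻¹ * ∑ᶠ c ∈ (E : Set (BitVec3 n0 n1 n2)),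
        ∑ e, q e * (if dec (x + c + e) - x ∈ E then 0 else 1) ≤
      ∑ e, q e * #{v ∈ confusable t e | v ∈ D ∧ v ∉ E} := by
  refine inv_natCard_mul_finsum_mem_le (Set.toFinite _) ⟨0, E.zero_mem⟩ fun c hc => ?_
  refine sum_le_sum fun e _ => ?_
  rcases eq_or_ne (q e) 0 with hqe | hqe
  · simp [hqe]
  exact mul_le_mul_of_nonneg_left (hdec.indicator_error_le_card hED hx hc (hq e hqe)) (hq0 e)

end IsMinWeightDecoder

end BitVec3

open BitVec3

open Classical in
theorem random_hashing_error_bound_general (n0 n1 n2 t m : ℕ)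
    (Ω : Type*) [Fintype Ω] (μ : Ω → ℝ) (hμ0 : ∀ ω, 0 ≤ μ ω)
    (C1 : Submodule (ZMod 2) (BitVec3 n0 n1 n2))
    (C2 : Ω → Submodule (ZMod 2) (BitVec3 n0 n1 n2))
    (hC2sub : ∀ ω, C2 ω ≤ C1)
    (hrand : ∀ x : BitVec3 n0 n1 n2, x ∉ dualCode C1 →
      ∑ᶠ ω ∈ {ω | x ∈ dualCode (C2 ω)}, μ ω ≤ ((2 : ℝ) ^ m)⁻¹)
    -- the channel: an additive error `e` with distribution `q`, supported on errors
    -- vanishing on the 0th part and of Hamming weight at most `t` on the 1st part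
    (q : BitVec3 n0 n1 n2 → ℝ) (hq0 : ∀ e, 0 ≤ q e) (hq1 : ∑ e, q e = 1)
    (hqsupp : ∀ e, q e ≠ 0 →
      (∀ i : Fin n0, e (Sum.inl i) = 0) ∧
      hammingNorm (fun i : Fin n1 => e (Sum.inr (Sum.inl i))) ≤ t)
    -- the sent word
    (x : BitVec3 n0 n1 n2) (hx : ∀ ω, x ∈ dualCode (C2 ω))
    -- the decoder
    (Γ : Ω → BitVec3 n0 n1 n2 → BitVec3 n0 n1 n2)
    (hΓmem : ∀ ω y, Γ ω y ∈ dualCode (C2 ω))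
    (hΓ0 : ∀ ω y (i : Fin n0), Γ ω y (Sum.inl i) = y (Sum.inl i))
    (hΓmin : ∀ ω y z, z ∈ dualCode (C2 ω) →
      (∀ i : Fin n0, z (Sum.inl i) = y (Sum.inl i)) →
      hammingNorm (fun i : Fin n1 => (y - Γ ω y) (Sum.inr (Sum.inl i))) ≤
        hammingNorm (fun i : Fin n1 => (y - z) (Sum.inr (Sum.inl i)))) :
    ∑ ω, μ ω * ((Nat.card (dualCode C1) : ℝ)⁻¹ *
        ∑ᶠ c ∈ (dualCode C1 : Set (BitVec3 n0 n1 n2)),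
          ∑ e, q e * (if Γ ω (x + c + e) - x ∈ dualCode C1 then 0 else 1)) ≤
      (2 : ℝ) ^ ((n1 : ℝ) * hbar ((t : ℝ) / (n1 : ℝ)) + (n2 : ℝ) - (m : ℝ)) := by
  have hdec ω : IsMinWeightDecoder (dualCode (C2 ω)) (Γ ω) :=
    ⟨hΓmem ω, fun y => funext (hΓ0 ω y), fun y z hz h => hΓmin ω y z hz (congrFun h)⟩
  have hadm e (he : q e ≠ 0) : IsAdmissibleError t e := ⟨funext (hqsupp e he).1, (hqsupp e he).2⟩
  have hprob v : ∑ ω with v ∈ dualCode (C2 ω) ∧ v ∉ dualCode C1, μ ω ≤ ((2 : ℝ) ^ m)⁻¹ := by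
    by_cases hv : v ∈ dualCode C1
    · simp [hv]
    · have := hrand v hv
      rw [finsum_mem_eq_toFinset_sum, Set.toFinset_ofPred] at this
      simpa [hv] using this
  set K : ℝ := 2 ^ ((n1 : ℝ) * hbar (t / n1)) * 2 ^ n2
  calc _ ≤ ∑ ω, μ ω *
          ∑ e, q e * #{v ∈ confusable t e | v ∈ dualCode (C2 ω) ∧ v ∉ dualCode C1} := by
        gcongr with ω
        exacts [hμ0 ω, (hdec ω).average_error_le (dualCode_anti (hC2sub ω)) (hx ω) hq0 hadm]
    _ = ∑ e, q e *
          ∑ ω, μ ω * #{v ∈ confusable t e | v ∈ dualCode (C2 ω) ∧ v ∉ dualCode C1} := by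
        simp_rw [mul_sum]
        rw [sum_comm]
        simp_rw [mul_left_comm]
    _ ≤ ∑ e, q e * (K * ((2 : ℝ) ^ m)⁻¹) := by
        gcongr with e
        · exact hq0 e
        refine (sum_mul_card_filter_le μ _ _ fun v _ => hprob v).trans ?_
        gcongr
        exact card_confusable_le_two_rpow t e
    _ = K * ((2 : ℝ) ^ m)⁻¹ := by rw [← sum_mul, hq1, one_mul]
    _ = _ := by
        rw [Real.rpow_sub two_pos, Real.rpow_add two_pos, Real.rpow_natCast, Real.rpow_natCast,
          div_eq_mul_inv]

open Classical in
/-- Random-hashing error bound (Proposition 1 / Theorem 3 of the paper).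
`C₁` is an `(l+m)`-dimensional code, `C₂(X)` a random `m`-dimensional subcode such that
every `x ∉ C₁^⊥` lies in `C₂(X)^⊥` with probability at most `2^{-m}`.  The coordinates
are partitioned into a noiseless part (size `n₀`), a part with at most `t ≤ n₁/2` errors
(size `n₁`) and an arbitrary part (size `n₂`).  Alice sends a uniformly random
representative of a coset `[x] ∈ C₂(X)^⊥/C₁^⊥`, and Bob decodes by `Γ`, which outputs
an element of `C₂(X)^⊥` agreeing with `y` on the noiseless part and minimizing the
Hamming weight of the difference on the `n₁`-part.  Then the expected decoding error
probability is at most `2^{n₁ h̄(t/n₁) + n₂ - m}`. -/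
theorem random_hashing_error_bound (n0 n1 n2 t l m : ℕ) (ht : 2 * t ≤ n1)
    (Ω : Type*) [Fintype Ω] (μ : Ω → ℝ) (hμ0 : ∀ ω, 0 ≤ μ ω) (hμ1 : ∑ ω, μ ω = 1)
    (C1 : Submodule (ZMod 2) (BitVec3 n0 n1 n2))
    (hC1rank : Module.finrank (ZMod 2) C1 = l + m)
    (C2 : Ω → Submodule (ZMod 2) (BitVec3 n0 n1 n2))
    (hC2sub : ∀ ω, C2 ω ≤ C1)
    (hC2rank : ∀ ω, Module.finrank (ZMod 2) (C2 ω) = m)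
    (hrand : ∀ x : BitVec3 n0 n1 n2, x ∉ dualCode C1 →
      ∑ᶠ ω ∈ {ω | x ∈ dualCode (C2 ω)}, μ ω ≤ ((2 : ℝ) ^ m)⁻¹)
    -- the channel: an additive error `e` with distribution `q`, supported on errors
    -- vanishing on the 0th part and of Hamming weight at most `t` on the 1st part
    (q : BitVec3 n0 n1 n2 → ℝ) (hq0 : ∀ e, 0 ≤ q e) (hq1 : ∑ e, q e = 1)
    (hqsupp : ∀ e, q e ≠ 0 →
      (∀ i : Fin n0, e (Sum.inl i) = 0) ∧
      hammingNorm (fun i : Fin n1 => e (Sum.inr (Sum.inl i))) ≤ t)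
    -- the sent word
    (x : BitVec3 n0 n1 n2) (hx : ∀ ω, x ∈ dualCode (C2 ω))
    -- the decoder
    (Γ : Ω → BitVec3 n0 n1 n2 → BitVec3 n0 n1 n2)
    (hΓmem : ∀ ω y, Γ ω y ∈ dualCode (C2 ω))
    (hΓ0 : ∀ ω y (i : Fin n0), Γ ω y (Sum.inl i) = y (Sum.inl i))
    (hΓmin : ∀ ω y z, z ∈ dualCode (C2 ω) →
      (∀ i : Fin n0, z (Sum.inl i) = y (Sum.inl i)) →
      hammingNorm (fun i : Fin n1 => (y - Γ ω y) (Sum.inr (Sum.inl i))) ≤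
        hammingNorm (fun i : Fin n1 => (y - z) (Sum.inr (Sum.inl i)))) :
    ∑ ω, μ ω * ((Nat.card (dualCode C1) : ℝ)⁻¹ *
        ∑ᶠ c ∈ (dualCode C1 : Set (BitVec3 n0 n1 n2)),
          ∑ e, q e * (if Γ ω (x + c + e) - x ∈ dualCode C1 then 0 else 1)) ≤
      (2 : ℝ) ^ ((n1 : ℝ) * hbar ((t : ℝ) / (n1 : ℝ)) + (n2 : ℝ) - (m : ℝ)) :=
  random_hashing_error_bound_general n0 n1 n2 t m Ω μ hμ0 C1 C2 hC2sub hrand q hq0 hq1 hqsupp x hx Γ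
    hΓmem hΓ0 hΓmin
end
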